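/- (Determinant-based adequacy bound.) Let H be a real Hilbert space, (v_i)_{i ≥ 1} an orthonormal family whose closed linear span contains u*, with c_i = ⟨u*, v_i⟩, and let (λ_i)_{i ≥ 1} be positive nonincreasing reals satisfying the source condition Σ_{i ≥ 1} c_i² / λ_i^{2s} ≤ R_s² for some s > 0 and R_s ≥ 0. Let U_h = span{v_1, …, v_r}. Then inf_{u ∈ U_h} ‖u* − u‖ ≤ R_s · λ_r^{s}; moreover, since λ_r ≤ (∏_{i=1}^r λ_i)^{1/r}, it follows that inf_{u ∈ U_h} ‖u* − u‖ ≤ R_s · (∏_{i=1}^r λ_i)^{s/r} = R_s · det(K)^{s/r}, where det(K) = ∏_{i=1}^r λ_i is the determinant of the NTK Gram matrix. -/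

import Mathlib

open scoped RealInnerProductSpace

/-! Parseval's identity on the closed span of `v` turns the error of the truncation
`∑_{i<r} ⟪u*, v i⟫ • v i` into the tail `∑_{i≥r} ⟪u*, v i⟫²`. Since `λ` is nonincreasing, every
tail term is at most `λ_{r-1}^{2s} · ⟪u*, v i⟫² / λ_i^{2s}`, so the source condition bounds the
tail by `(R_s λ_{r-1}^s)²`. The determinant form follows from `λ_{r-1}^r ≤ ∏_{i<r} λ_i`. -/

open Submodule

section Parseval

variable {ι H : Type*} [NormedAddCommGroup H] [InnerProductSpace ℝ H] [CompleteSpace H]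
  {v : ι → H} {x : H}

theorem Orthonormal.hasSum_inner_sq_of_mem_topologicalClosure (hv : Orthonormal ℝ v)
    (hx : x ∈ (span ℝ (Set.range v)).topologicalClosure) :
    HasSum (fun i => ⟪x, v i⟫ ^ 2) (‖x‖ ^ 2) := by
  set K := (span ℝ (Set.range v)).topologicalClosure
  have : CompleteSpace K := (span ℝ (Set.range v)).isClosed_topologicalClosure.completeSpace_coe
  let w : ι → K := fun i => ⟨v i, le_topologicalClosure _ (subset_span ⟨i, rfl⟩)⟩
  have hw : Orthonormal ℝ w :=
    ⟨fun i => by simpa [w] using hv.1 i, fun i j hij => by simpa [w, coe_inner] using hv.2 hij⟩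
  have hw_total : (span ℝ (Set.range w))ᗮ = ⊥ := by
    refine eq_bot_iff.mpr fun z hz => ?_
    have hK : K ≤ (ℝ ∙ (z : H))ᗮ := by
      refine topologicalClosure_minimal _ (span_le.mpr ?_) (isClosed_orthogonal _)
      rintro _ ⟨i, rfl⟩
      rw [SetLike.mem_coe, mem_orthogonal_singleton_iff_inner_right]
      exact inner_left_of_mem_orthogonal (K := span ℝ (Set.range w)) (subset_span ⟨i, rfl⟩) hz
    simpa [mem_orthogonal_singleton_iff_inner_right] using hK z.2
  simpa [w, coe_inner, real_inner_self_eq_norm_sq, real_inner_comm x (v _), ← sq] using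
    (HilbertBasis.mkOfOrthogonalEqBot hw hw_total).hasSum_inner_mul_inner ⟨x, hx⟩ ⟨x, hx⟩

theorem Orthonormal.hasSum_inner_sq_norm_sub_sum [DecidableEq ι] (hv : Orthonormal ℝ v)
    (hx : x ∈ (span ℝ (Set.range v)).topologicalClosure) (s : Finset ι) :
    HasSum (fun i => if i ∈ s then 0 else ⟪x, v i⟫ ^ 2)
      (‖x - ∑ i ∈ s, ⟪x, v i⟫ • v i‖ ^ 2) := by
  have hy : ∑ i ∈ s, ⟪x, v i⟫ • v i ∈ (span ℝ (Set.range v)).topologicalClosure :=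
    le_topologicalClosure _ (sum_smul_mem _ _ fun i _ => subset_span ⟨i, rfl⟩)
  convert hv.hasSum_inner_sq_of_mem_topologicalClosure (sub_mem hx hy) using 2 with i
  by_cases hi : i ∈ s <;>
    simp [hi, inner_sub_left, sum_inner, real_inner_smul_left, orthonormal_iff_ite.mp hv]

end Parseval

theorem sq_le_rpow_mul_div_rpow_of_antitone {lam : ℕ → ℝ} (hlam_pos : ∀ i, 0 < lam i)
    (hlam_mono : Antitone lam) {s : ℝ} (hs : 0 ≤ s) (c : ℝ) {r i : ℕ} (hi : r ≤ i) :
    c ^ 2 ≤ lam (r - 1) ^ (2 * s) * (c ^ 2 / lam i ^ (2 * s)) := by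
  have hpos : 0 < lam i ^ (2 * s) := Real.rpow_pos_of_pos (hlam_pos i) _
  calc c ^ 2 = lam i ^ (2 * s) * (c ^ 2 / lam i ^ (2 * s)) := by field_simp
    _ ≤ lam (r - 1) ^ (2 * s) * (c ^ 2 / lam i ^ (2 * s)) := by
      gcongr
      · exact (hlam_pos i).le
      · exact hlam_mono (by omega)

theorem rpow_le_prod_rpow_div_card {ι : Type*} {s : Finset ι} (hs : s.Nonempty) {f : ι → ℝ}
    {a t : ℝ} (ha : 0 ≤ a) (hf : ∀ i ∈ s, a ≤ f i) (ht : 0 ≤ t) :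
    a ^ t ≤ (∏ i ∈ s, f i) ^ (t / s.card) := by
  have hcard : (s.card : ℝ) ≠ 0 := Nat.cast_ne_zero.mpr hs.card_pos.ne'
  have hpow : a ^ s.card ≤ ∏ i ∈ s, f i := by
    simpa using Finset.prod_le_prod (fun _ _ => ha) hf
  calc a ^ t = (a ^ s.card) ^ (t / s.card) := by
        rw [← Real.rpow_natCast, ← Real.rpow_mul ha, mul_div_cancel₀ _ hcard]
    _ ≤ (∏ i ∈ s, f i) ^ (t / s.card) := by gcongr

/-- Determinant-based adequacy bound.  Under the source condition, the distance
from `u*` to `U_h = span{v_0, …, v_{r-1}}` is at most `R_s · λ_{r-1}^s`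
(`λ_{r-1}` being the smallest of the first `r` eigenvalues); moreover, since
the smallest eigenvalue is at most the geometric mean `(∏_{i<r} λ_i)^{1/r}`,
the distance is at most `R_s · (det K)^{s/r}` where `det K = ∏_{i<r} λ_i`. -/
theorem determinant_based_adequacy_bound
    {H : Type*} [NormedAddCommGroup H] [InnerProductSpace ℝ H] [CompleteSpace H]
    [DecidableEq H]
    (v : ℕ → H) (hv : Orthonormal ℝ v)
    (ustar : H)
    (hmem : ustar ∈ closure ((Submodule.span ℝ (Set.range v) : Submodule ℝ H) : Set H))
    (lam : ℕ → ℝ) (hlam_pos : ∀ i, 0 < lam i) (hlam_mono : Antitone lam)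
    (s Rs : ℝ) (hs : 0 < s) (hRs : 0 ≤ Rs)
    (hsummable : Summable fun i : ℕ => ⟪ustar, v i⟫ ^ 2 / lam i ^ (2 * s))
    (hsource : (∑' i : ℕ, ⟪ustar, v i⟫ ^ 2 / lam i ^ (2 * s)) ≤ Rs ^ 2)
    (r : ℕ) (hr : 1 ≤ r) :
    (⨅ u : Submodule.span ℝ (((Finset.range r).image v : Finset H) : Set H),
        ‖ustar - (u : H)‖) ≤ Rs * lam (r - 1) ^ s
    ∧ (⨅ u : Submodule.span ℝ (((Finset.range r).image v : Finset H) : Set H),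
        ‖ustar - (u : H)‖) ≤ Rs * (∏ i ∈ Finset.range r, lam i) ^ (s / r) := by
  set y := ∑ i ∈ Finset.range r, ⟪ustar, v i⟫ • v i
  have hy : y ∈ span ℝ (((Finset.range r).image v : Finset H) : Set H) :=
    sum_smul_mem _ _ fun i hi => subset_span (Finset.mem_coe.mpr (Finset.mem_image_of_mem v hi))
  have hlam_r := hlam_pos (r - 1)
  have hdist_sq : ‖ustar - y‖ ^ 2 ≤ (Rs * lam (r - 1) ^ s) ^ 2 :=
    calc ‖ustar - y‖ ^ 2
        ≤ lam (r - 1) ^ (2 * s) * ∑' i, ⟪ustar, v i⟫ ^ 2 / lam i ^ (2 * s) := by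
          refine hasSum_le (fun i => ?_) (hv.hasSum_inner_sq_norm_sub_sum
            (by rwa [← SetLike.mem_coe, topologicalClosure_coe]) _) (hsummable.hasSum.mul_left _)
          split_ifs with hi
          · exact mul_nonneg (Real.rpow_nonneg hlam_r.le _)
              (div_nonneg (sq_nonneg _) (Real.rpow_nonneg (hlam_pos i).le _))
          · exact sq_le_rpow_mul_div_rpow_of_antitone hlam_pos hlam_mono hs.le _
              (by simpa using hi)
      _ ≤ lam (r - 1) ^ (2 * s) * Rs ^ 2 := by gcongr
      _ = (Rs * lam (r - 1) ^ s) ^ 2 := by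
          rw [mul_pow, ← Real.rpow_mul_natCast hlam_r.le, mul_comm]
          norm_num [mul_comm]
  have hdist : (⨅ u : span ℝ (((Finset.range r).image v : Finset H) : Set H),
      ‖ustar - (u : H)‖) ≤ Rs * lam (r - 1) ^ s :=
    ciInf_le_of_le ⟨0, by rintro _ ⟨u, rfl⟩; exact norm_nonneg _⟩ ⟨y, hy⟩
      (le_of_sq_le_sq hdist_sq (by positivity))
  refine ⟨hdist, hdist.trans (mul_le_mul_of_nonneg_left ?_ hRs)⟩
  simpa using rpow_le_prod_rpow_div_card (Finset.nonempty_range_iff.mpr (by omega)) hlam_r.le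
    (fun i hi => hlam_mono (by simp at hi; omega)) hs.le
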